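/- Let (X,d) be a complete metric space, T : X → X, and E : (0,∞) → (0,∞) a function such that E(t) < t for all t > 0, and such that for every t > 0 and every sequence (t_n) ⊂ (t,∞) with t_n → t one has liminf_n E(t_n) < t. If d(Tx,Ty) ≤ E(d(x,y)) for all x,y ∈ X with x ≠ y, then T is a Picard operator. -/

import Mathlib

open Filter Topology

/-- `T` is a Picard operator: it has a unique fixed point `u` and every
sequence of iterates converges to `u`. -/
def IsPicardOperator {X : Type*} [MetricSpace X] (T : X → X) : Prop :=
  ∃ u : X, T u = u ∧ (∀ v : X, T v = v → v = u) ∧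
    ∀ x : X, Tendsto (fun n => T^[n] x) atTop (𝓝 u)

/-- `T` is contractive: `d(Tx,Ty) < d(x,y)` whenever `x ≠ y`. -/
def Contractive {X : Type*} [MetricSpace X] (T : X → X) : Prop :=
  ∀ x y : X, x ≠ y → dist (T x) (T y) < dist x y

/-- The Matkowski–Węgrzyk condition. -/
def MWCondition {X : Type*} [MetricSpace X] (T : X → X) : Prop :=
  ∀ ε > (0 : ℝ), ∃ δ > (0 : ℝ), ∀ x y : X,
    ε < dist x y → dist x y < ε + δ → dist (T x) (T y) ≤ ε

/-- `T` is a CJMP-contraction. -/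
def IsCJMP {X : Type*} [MetricSpace X] (T : X → X) : Prop :=
  Contractive T ∧ MWCondition T

/-!
A map with `d(Tx,Ty) ≤ E(d(x,y))` is contractive since `E(t) < t`, and the liminf condition on `E`
forces `E ≤ ε` on some interval `(ε, ε + δ)`, which is the Matkowski–Węgrzyk condition.
For such a CJMP-contraction the distances `d(Tⁿx, Tⁿy)` decrease to a limit `L`; if `L > 0`, they
eventually enter `(L, L + δ)` and the next one is `≤ L`, which is impossible. An orbit that has
come close to being fixed cannot leave a small ball again, so orbits are Cauchy, and their limits
are fixed points of the continuous map `T`, unique because `T` is contractive.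
-/

open Function

namespace Contractive

variable {X : Type*} [MetricSpace X] {T : X → X}

theorem dist_le (hT : Contractive T) (x y : X) : dist (T x) (T y) ≤ dist x y := by
  rcases eq_or_ne x y with rfl | hxy
  · simp
  · exact (hT x y hxy).le

theorem continuous (hT : Contractive T) : Continuous T :=
  (LipschitzWith.of_dist_le_mul (K := 1) fun x y => by simpa using hT.dist_le x y).continuous

theorem eq_of_isFixedPt (hT : Contractive T) {x y : X} (hx : IsFixedPt T x)
    (hy : IsFixedPt T y) : x = y := by
  by_contra hxy
  simpa [hx.eq, hy.eq] using hT x y hxy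

end Contractive

namespace IsCJMP

variable {X : Type*} [MetricSpace X] {T : X → X}

theorem tendsto_dist_iterate (hT : IsCJMP T) (x y : X) :
    Tendsto (fun n => dist (T^[n] x) (T^[n] y)) atTop (𝓝 0) := by
  set d : ℕ → ℝ := fun n => dist (T^[n] x) (T^[n] y)
  have hd_succ (n : ℕ) : d (n + 1) = dist (T (T^[n] x)) (T (T^[n] y)) := by
    simp only [d, iterate_succ_apply']
  have hanti : Antitone d :=
    antitone_nat_of_succ_le fun n => (hd_succ n).trans_le (hT.1.dist_le _ _)
  have hbdd : BddBelow (Set.range d) := ⟨0, by rintro _ ⟨n, rfl⟩; exact dist_nonneg⟩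
  have hlim := tendsto_atTop_ciInf hanti hbdd
  set L := ⨅ n, d n
  suffices L = 0 by rwa [this] at hlim
  by_contra hL
  have hL_pos : 0 < L := (le_ciInf fun n => dist_nonneg).lt_of_ne' hL
  have hL_lt (n : ℕ) : L < d n := by
    have hne : T^[n] x ≠ T^[n] y := dist_pos.mp (hL_pos.trans_le (ciInf_le hbdd n))
    calc L ≤ d (n + 1) := ciInf_le hbdd _
      _ < d n := (hd_succ n).trans_lt (hT.1 _ _ hne)
  obtain ⟨δ, hδ, hMW⟩ := hT.2 L hL_pos
  obtain ⟨n, hn⟩ := (hlim.eventually (gt_mem_nhds (lt_add_of_pos_right L hδ))).exists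
  exact (hL_lt (n + 1)).not_ge ((hd_succ n).trans_le (hMW _ _ (hL_lt n) hn))

theorem exists_pos_forall_dist_iterate_lt (hT : IsCJMP T) {ε : ℝ} (hε : 0 < ε) :
    ∃ η > 0, ∀ z : X, dist z (T z) < η → ∀ m, dist z (T^[m] z) < 2 * ε := by
  obtain ⟨δ, hδ, hMW⟩ := hT.2 ε hε
  refine ⟨min δ ε, lt_min hδ hε, fun z hz m => ?_⟩
  suffices dist z (T^[m] z) < ε + min δ ε by linarith [min_le_right δ ε]
  induction m with
  | zero => simpa using add_pos hε (lt_min hδ hε)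
  | succ m ih =>
    have hstep : dist (T z) (T (T^[m] z)) ≤ ε := by
      rcases le_or_gt (dist z (T^[m] z)) ε with h | h
      · exact (hT.1.dist_le _ _).trans h
      · exact hMW _ _ h (ih.trans_le (by gcongr; exact min_le_left _ _))
    calc dist z (T^[m + 1] z) ≤ dist z (T z) + dist (T z) (T (T^[m] z)) := by
          rw [iterate_succ_apply']; exact dist_triangle _ _ _
      _ < ε + min δ ε := by linarith

theorem cauchySeq_iterate (hT : IsCJMP T) (x : X) : CauchySeq fun n => T^[n] x := by
  rw [Metric.cauchySeq_iff']
  intro ε hε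
  obtain ⟨η, hη, horbit⟩ := hT.exists_pos_forall_dist_iterate_lt (half_pos hε)
  obtain ⟨N, hN⟩ := ((hT.tendsto_dist_iterate x (T x)).eventually (gt_mem_nhds hη)).exists
  rw [← iterate_succ_apply, iterate_succ_apply'] at hN
  refine ⟨N, fun n hn => ?_⟩
  have := horbit _ hN (n - N)
  rwa [← iterate_add_apply, Nat.sub_add_cancel hn, dist_comm, mul_div_cancel₀ _ two_ne_zero]
    at this

theorem exists_isFixedPt_tendsto_iterate [CompleteSpace X] (hT : IsCJMP T) (x : X) :
    ∃ u, IsFixedPt T u ∧ Tendsto (fun n => T^[n] x) atTop (𝓝 u) := by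
  obtain ⟨u, hu⟩ := cauchySeq_tendsto_of_complete (hT.cauchySeq_iterate x)
  exact ⟨u, isFixedPt_of_tendsto_iterate hu hT.1.continuous.continuousAt, hu⟩

theorem isPicardOperator [CompleteSpace X] [Nonempty X] (hT : IsCJMP T) :
    IsPicardOperator T := by
  obtain ⟨u, hu, -⟩ := hT.exists_isFixedPt_tendsto_iterate (Classical.arbitrary X)
  refine ⟨u, hu, fun v hv => hT.1.eq_of_isFixedPt hv hu, fun x => ?_⟩
  obtain ⟨w, hw, hxw⟩ := hT.exists_isFixedPt_tendsto_iterate x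
  rwa [hT.1.eq_of_isFixedPt hw hu] at hxw

end IsCJMP

theorem exists_pos_forall_le_of_liminf_lt {E : ℝ → ℝ} (hE : ∀ t > (0 : ℝ), E t < t)
    (hliminf : ∀ t > (0 : ℝ), ∀ tn : ℕ → ℝ, (∀ n, t < tn n) → Tendsto tn atTop (𝓝 t) →
      liminf (fun n => E (tn n)) atTop < t)
    {ε : ℝ} (hε : 0 < ε) : ∃ δ > 0, ∀ t, ε < t → t < ε + δ → E t ≤ ε := by
  by_contra! h
  choose tn htn_gt htn_lt hE_gt using fun n : ℕ => h (1 / (n + 1)) Nat.one_div_pos_of_nat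
  have htend : Tendsto tn atTop (𝓝 ε) := by
    refine tendsto_of_tendsto_of_tendsto_of_le_of_le tendsto_const_nhds ?_
      (fun n => (htn_gt n).le) (fun n => (htn_lt n).le)
    simpa using (tendsto_const_nhds (x := ε)).add tendsto_one_div_add_atTop_nhds_zero_nat
  have hbdd : IsBoundedUnder (· ≤ ·) atTop fun n => E (tn n) :=
    htend.isBoundedUnder_le.mono_le
      (Eventually.of_forall fun n => (hE _ (hε.trans (htn_gt n))).le)
  exact (hliminf ε hε tn htn_gt htend).not_ge
    (le_liminf_of_le hbdd.isCoboundedUnder_ge (Eventually.of_forall fun n => (hE_gt n).le))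

theorem stmt_9_general {X : Type*} [MetricSpace X] [CompleteSpace X] [Nonempty X] (T : X → X)
    (E : ℝ → ℝ)
    (h1 : ∀ t > (0 : ℝ), E t < t)
    (h2 : ∀ t > (0 : ℝ), ∀ tn : ℕ → ℝ, (∀ n, t < tn n) → Tendsto tn atTop (𝓝 t) →
      liminf (fun n => E (tn n)) atTop < t)
    (hcontr : ∀ x y : X, x ≠ y → dist (T x) (T y) ≤ E (dist x y)) :
    IsPicardOperator T := by
  have hcontractive : Contractive T := fun x y hxy =>
    (hcontr x y hxy).trans_lt (h1 _ (dist_pos.mpr hxy))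
  have hMW : MWCondition T := fun ε hε => by
    obtain ⟨δ, hδ, hEδ⟩ := exists_pos_forall_le_of_liminf_lt h1 h2 hε
    exact ⟨δ, hδ, fun x y hlt hgt =>
      (hcontr x y (dist_pos.mp (hε.trans hlt))).trans (hEδ _ hlt hgt)⟩
  exact IsCJMP.isPicardOperator ⟨hcontractive, hMW⟩

theorem stmt_9 {X : Type*} [MetricSpace X] [CompleteSpace X] [Nonempty X] (T : X → X)
    (E : ℝ → ℝ) (hEpos : ∀ t > (0 : ℝ), 0 < E t)
    (h1 : ∀ t > (0 : ℝ), E t < t)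
    (h2 : ∀ t > (0 : ℝ), ∀ tn : ℕ → ℝ, (∀ n, t < tn n) → Tendsto tn atTop (𝓝 t) →
      liminf (fun n => E (tn n)) atTop < t)
    (hcontr : ∀ x y : X, x ≠ y → dist (T x) (T y) ≤ E (dist x y)) :
    IsPicardOperator T :=
  stmt_9_general T E h1 h2 hcontr
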